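/- Let $\varphi : \mathbb{R} \times M \to M$ be a continuous flow on a metric space $M$, let $x \in M$, and suppose there exist points $z_+, z_-$ with $\varphi(t,x) \to z_+$ as $t \to +\infty$ and $\varphi(t,x) \to z_-$ as $t \to -\infty$. Suppose $g = \varphi(1,\cdot)$ is expansive with constant $\varepsilon$ on the closure of the orbit of $x$, and the orbit of $x$ is invariant under $g$. Then there exists no $\tau > 0$ with $\varphi(\tau, x) \ne x$ arbitrarily close to $x$; in fact, if $x$ is a limit point of its own orbit under small positive time shifts, then $x = z_+ = z_-$ is a fixed point of the flow. -/

import Mathlib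

open Filter

/-- If a flow trajectory converges to `zp` forward and `zm` backward in time, the
time-one map is expansive on the closure of the orbit, and `x` is a limit point of
its own orbit under arbitrarily small positive time shifts, then `x = zp = zm` is a
fixed point of the flow. -/
theorem stmt5 {M : Type*} [MetricSpace M] (φ : ℝ → M → M)
    (hcont : Continuous fun p : ℝ × M => φ p.1 p.2)
    (hflow0 : ∀ y, φ 0 y = y)
    (hflow : ∀ t s y, φ (t + s) y = φ t (φ s y))
    (x zp zm : M)
    (hplus : Tendsto (fun t => φ t x) atTop (nhds zp))
    (hminus : Tendsto (fun t => φ t x) atBot (nhds zm))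
    (ε : ℝ) (hε : 0 < ε)
    (hexp : ∀ y₁ ∈ closure {y | ∃ t : ℝ, φ t x = y},
            ∀ y₂ ∈ closure {y | ∃ t : ℝ, φ t x = y},
            (∀ k : ℤ, dist (φ (k : ℝ) y₁) (φ (k : ℝ) y₂) < ε) → y₁ = y₂)
    (hlimit : ∀ δ > (0 : ℝ), ∃ τ : ℝ, 0 < τ ∧ τ < δ ∧ dist x (φ τ x) < δ) :
    x = zp ∧ x = zm ∧ ∀ t : ℝ, φ t x = x := by
  -- forward/backward convergence within ε/4
  obtain ⟨Tp, hTp⟩ := (Metric.tendsto_atTop.mp hplus) (ε/4) (by linarith)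
  obtain ⟨Tm, hTm⟩ := Filter.eventually_atBot.mp ((Metric.tendsto_nhds.mp hminus) (ε/4) (by linarith))
  set T : ℝ := max Tp (max (-Tm) 1) with hT
  have hTpos : (1:ℝ) ≤ T := le_max_of_le_right (le_max_right _ _)
  have hTTp : Tp ≤ T := le_max_left _ _
  have hTTm : Tm ≥ -T := by
    have : -Tm ≤ T := le_max_of_le_right (le_max_left _ _)
    linarith
  -- tube lemma setup
  have hf : Continuous fun p : ℝ × M => dist (φ p.1 x) (φ p.1 p.2) := by
    apply Continuous.dist
    · exact hcont.comp (continuous_fst.prodMk continuous_const)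
    · exact hcont
  have hKcompact : IsCompact (Set.Icc (-(T+1)) (T+1)) := isCompact_Icc
  have hUopen : IsOpen {p : ℝ × M | dist (φ p.1 x) (φ p.1 p.2) < ε/2} :=
    isOpen_lt hf continuous_const
  have hsub : (Set.Icc (-(T+1)) (T+1)) ×ˢ ({x} : Set M) ⊆
      {p : ℝ × M | dist (φ p.1 x) (φ p.1 p.2) < ε/2} := by
    rintro ⟨t, y⟩ ⟨_, hy⟩
    simp only [Set.mem_singleton_iff] at hy
    subst hy
    simp only [Set.mem_setOf_eq, dist_self]
    linarith
  obtain ⟨u, v, huo, hvo, hKu, hxv, huv⟩ :=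
    generalized_tube_lemma hKcompact isCompact_singleton hUopen hsub
  have hxv' : x ∈ v := hxv rfl
  obtain ⟨δ0, hδ0pos, hball⟩ := Metric.isOpen_iff.mp hvo x hxv'
  -- key claim: arbitrarily small positive periods
  have hperiod : ∀ δ > (0:ℝ), ∃ τ : ℝ, 0 < τ ∧ τ < δ ∧ φ τ x = x := by
    intro δ hδ
    have hδ' : 0 < min δ (min δ0 1) := by
      simp [hδ, hδ0pos]
    obtain ⟨τ, hτ0, hτlt, hτdist⟩ := hlimit _ hδ'
    have hτδ : τ < δ := lt_of_lt_of_le hτlt (min_le_left _ _)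
    have hτδ0 : τ < δ0 := lt_of_lt_of_le hτlt (le_trans (min_le_right _ _) (min_le_left _ _))
    have hτ1 : τ < 1 := lt_of_lt_of_le hτlt (le_trans (min_le_right _ _) (min_le_right _ _))
    have hyv : φ τ x ∈ v := by
      apply hball
      rw [Metric.mem_ball, dist_comm]
      exact lt_of_lt_of_le hτdist (le_trans (min_le_right _ _) (min_le_left _ _))
    -- the trajectories of x and φ τ x stay ε-close
    have hclose : ∀ t : ℝ, dist (φ t x) (φ t (φ τ x)) < ε := by
      intro t
      rcases le_or_gt (|t|) (T+1) with hmid | hout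
      · have htK : t ∈ Set.Icc (-(T+1)) (T+1) := abs_le.mp hmid |>.imp neg_le.mp id |> fun h => ⟨(abs_le.mp hmid).1 |> fun h' => by linarith [(abs_le.mp hmid).1], (abs_le.mp hmid).2⟩
        have : (t, φ τ x) ∈ u ×ˢ v := ⟨hKu htK, hyv⟩
        exact lt_trans (huv this) (by linarith)
      · rw [← hflow]
        rcases le_or_gt 0 t with hpos | hneg
        · -- t > T+1 ≥ Tp
          have ht1 : t ≥ Tp := by
            have := abs_of_nonneg hpos ▸ hout
            linarith
          have ht2 : t + τ ≥ Tp := by linarith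
          calc dist (φ t x) (φ (t + τ) x)
              ≤ dist (φ t x) zp + dist (φ (t+τ) x) zp := dist_triangle_right _ _ _
            _ < ε/4 + ε/4 := add_lt_add (hTp t ht1) (hTp (t+τ) ht2)
            _ < ε := by linarith
        · -- t < -(T+1) ≤ Tm - 1
          have habs : -t > T + 1 := by
            have := abs_of_neg hneg ▸ hout
            linarith
          have ht1 : t ≤ Tm := by linarith
          have ht2 : t + τ ≤ Tm := by linarith
          calc dist (φ t x) (φ (t + τ) x)
              ≤ dist (φ t x) zm + dist (φ (t+τ) x) zm := dist_triangle_right _ _ _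
            _ < ε/4 + ε/4 := add_lt_add (hTm t ht1) (hTm (t+τ) ht2)
            _ < ε := by linarith
    have hx_mem : x ∈ closure {y | ∃ t : ℝ, φ t x = y} :=
      subset_closure ⟨0, hflow0 x⟩
    have hy_mem : φ τ x ∈ closure {y | ∃ t : ℝ, φ t x = y} :=
      subset_closure ⟨τ, rfl⟩
    have := hexp x hx_mem (φ τ x) hy_mem (fun k => hclose (k : ℝ))
    exact ⟨τ, hτ0, hτδ, this.symm⟩
  -- from arbitrarily small periods: the flow fixes x
  have hfix : ∀ t : ℝ, φ t x = x := by
    intro t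
    have hη : ∀ η > (0:ℝ), dist (φ t x) x < η := by
      intro η hη
      -- continuity of s ↦ φ s x at 0
      have hc : Continuous fun s : ℝ => φ s x :=
        hcont.comp (continuous_id.prodMk continuous_const)
      have hc0 : ContinuousAt (fun s : ℝ => φ s x) 0 := hc.continuousAt
      rw [Metric.continuousAt_iff] at hc0
      obtain ⟨δ', hδ'pos, hδ'⟩ := hc0 η hη
      obtain ⟨τ, hτ0, hτδ', hτp⟩ := hperiod δ' hδ'pos
      -- integer multiples of τ fix x
      have hneg : φ (-τ) x = x := by
        have := hflow (-τ) τ x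
        rw [neg_add_cancel, hflow0, hτp] at this
        exact this.symm
      have hint : ∀ n : ℤ, φ ((n : ℝ) * τ) x = x := by
        intro n
        induction n using Int.induction_on with
        | zero => simpa using hflow0 x
        | succ n ih =>
          push_cast at ih ⊢
          rw [show ((n:ℝ)+1) * τ = τ + (n:ℝ) * τ by ring, hflow, ih, hτp]
        | pred n ih =>
          push_cast at ih ⊢
          rw [show (-(n:ℝ)-1) * τ = -τ + (-(n:ℝ)) * τ by ring, hflow, ih, hneg]
      set n : ℤ := ⌊t / τ⌋ with hn
      set r : ℝ := t - (n : ℝ) * τ with hr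
      have hr0 : 0 ≤ r := by
        have := Int.sub_floor_div_mul_nonneg t hτ0
        simpa [hr, hn] using this
      have hrτ : r < τ := by
        have := Int.sub_floor_div_mul_lt t hτ0
        simpa [hr, hn] using this
      have key : φ t x = φ r x := by
        have : t = r + (n:ℝ) * τ := by ring
        rw [this, hflow, hint]
      rw [key]
      have : dist r 0 < δ' := by
        rw [Real.dist_eq, sub_zero, abs_of_nonneg hr0]
        linarith
      have := hδ' this
      rwa [hflow0] at this
    by_contra h
    have hd : 0 < dist (φ t x) x := dist_pos.mpr h
    exact lt_irrefl _ (hη _ hd)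
  refine ⟨?_, ?_, hfix⟩
  · have : Tendsto (fun _ : ℝ => x) atTop (nhds zp) := by
      simpa [hfix] using hplus
    exact tendsto_nhds_unique tendsto_const_nhds this
  · have : Tendsto (fun _ : ℝ => x) atBot (nhds zm) := by
      simpa [hfix] using hminus
    exact tendsto_nhds_unique tendsto_const_nhds this
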